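/- arXiv:1611.05153 — 6 statements merged into one kernel-verified Lean document; each statement's English description precedes it below -/
import Mathlib

section
/- Let z > 0 and q > 0 be real, let N be a natural number, and let a ∈ ℂ satisfy Re a > N + 1. Then | ∫₀^∞ exp(−(x + q/x)/z) · x^{a−1} dx − Σ_{m=0}^{N} (−1)^m q^m z^{a−2m} Γ(a−m)/m! | ≤ q^{N+1} · z^{Re a − 2(N+1)} · Γ(Re a − N − 1) / (N+1)!. -/
open MeasureTheory Set

/-! Write the integrand as `x^{a-1} e^{-x/z} e^{-u}` with `u = q/(xz)` and replace `e^{-u}` by its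
Taylor polynomial of degree `N`. The `m`-th Taylor term integrates to `z^{a-m} Γ(a-m)` times its
coefficient, and the Lagrange remainder `|e^{-u} - ∑_{m ≤ N} (-u)^m/m!| ≤ u^{N+1}/(N+1)!` leaves
the Gamma integral of `x^{Re a - N - 2} e^{-x/z}`, which converges because `Re a > N + 1`. -/

open Real in
theorem abs_exp_neg_sub_sum_range_le {t : ℝ} (ht : 0 ≤ t) (n : ℕ) :
    |exp (-t) - ∑ m ∈ Finset.range (n + 1), (-t) ^ m / m.factorial|
      ≤ t ^ (n + 1) / (n + 1).factorial := by
  rcases ht.eq_or_lt with rfl | ht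
  · simp [Finset.sum_range_succ']
  have hf : (fun s => exp (-s)) = fun s => exp (-1 * s) := by simp
  have hcd : ContDiff ℝ ⊤ fun s => exp (-s) := by fun_prop
  obtain ⟨ξ, hξ, hrem⟩ := taylor_mean_remainder_lagrange_iteratedDeriv (n := n) ht.ne
    (hcd.contDiffOn.of_le le_top)
  have htaylor : taylorWithinEval (fun s => exp (-s)) n (uIcc 0 t) 0 t
      = ∑ m ∈ Finset.range (n + 1), (-t) ^ m / m.factorial := by
    rw [taylor_within_apply]
    refine Finset.sum_congr rfl fun m _ => ?_
    rw [iteratedDerivWithin_eq_iteratedDeriv (uniqueDiffOn_uIcc ht.ne) (hcd.contDiffAt.of_le le_top)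
      left_mem_uIcc, hf, iteratedDeriv_exp_const_mul]
    simp only [sub_zero, mul_zero, exp_zero, mul_one, smul_eq_mul, neg_pow t, div_eq_inv_mul]
    ring
  have hξ0 : 0 < ξ := by rw [uIoo_of_le ht.le] at hξ; exact hξ.1
  rw [← htaylor, hrem, hf, iteratedDeriv_exp_const_mul, sub_zero, abs_div, abs_mul, abs_mul]
  simp only [abs_pow, abs_neg, abs_one, one_pow, one_mul, abs_exp, Nat.abs_cast, abs_of_pos ht]
  gcongr
  exact mul_le_of_le_one_left (by positivity) (exp_le_one_iff.2 (by linarith))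

theorem integrableOn_rpow_mul_exp_neg_mul {p r : ℝ} (hp : 0 < p) (hr : 0 < r) :
    IntegrableOn (fun t : ℝ => t ^ (p - 1) * Real.exp (-(r * t))) (Ioi 0) :=
  (integrableOn_rpow_mul_exp_neg_mul_rpow (s := p - 1) (by linarith) one_pos hr).congr_fun
    (fun t _ => by simp) measurableSet_Ioi

theorem integrableOn_cpow_mul_exp_neg_mul {a : ℂ} {r : ℝ} (ha : 0 < a.re) (hr : 0 < r) :
    IntegrableOn (fun t : ℝ => (t : ℂ) ^ (a - 1) * Complex.exp (-(r * t))) (Ioi 0) := by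
  refine (integrableOn_rpow_mul_exp_neg_mul ha hr).mono' (by fun_prop) ?_
  filter_upwards [self_mem_ae_restrict measurableSet_Ioi] with t ht
  rw [norm_mul, Complex.norm_cpow_eq_rpow_re_of_pos ht, ← Complex.ofReal_mul, ← Complex.ofReal_neg,
    Complex.norm_exp_ofReal]
  simp

theorem cpow_sub_natCast_sub_one {t : ℝ} (ht : 0 < t) (a : ℂ) (m : ℕ) :
    (t : ℂ) ^ (a - m - 1) = (t : ℂ) ^ (a - 1) / (t : ℂ) ^ m := by
  rw [sub_right_comm, Complex.cpow_sub _ _ (by exact_mod_cast ht.ne'), Complex.cpow_natCast]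

theorem sum_mul_cpow_sub_natCast_sub_one {t : ℝ} (ht : 0 < t) (a : ℂ) (c : ℝ) (N : ℕ) :
    ∑ m ∈ Finset.range N, (-c : ℂ) ^ m / m.factorial * ((t : ℂ) ^ (a - m - 1))
      = (t : ℂ) ^ (a - 1) * ↑(∑ m ∈ Finset.range N, (-(c / t)) ^ m / m.factorial) := by
  push_cast
  rw [Finset.mul_sum]
  refine Finset.sum_congr rfl fun m _ => ?_
  rw [cpow_sub_natCast_sub_one ht, ← neg_div, div_pow]
  ring

theorem norm_cpow_mul_exp_neg_div_sub_sum_le {t : ℝ} (ht : 0 < t) (a : ℂ) {c : ℝ} (hc : 0 ≤ c)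
    (N : ℕ) :
    ‖(t : ℂ) ^ (a - 1) * Complex.exp (-(c / t))
        - ∑ m ∈ Finset.range (N + 1), (-c : ℂ) ^ m / m.factorial * (t : ℂ) ^ (a - m - 1)‖
      ≤ c ^ (N + 1) / (N + 1).factorial * t ^ (a.re - N - 1 - 1) := by
  rw [sum_mul_cpow_sub_natCast_sub_one ht, ← mul_sub, ← Complex.ofReal_div, ← Complex.ofReal_neg,
    ← Complex.ofReal_exp, ← Complex.ofReal_sub, norm_mul, Complex.norm_cpow_eq_rpow_re_of_pos ht,
    Complex.norm_real, Real.norm_eq_abs]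
  have hpow : t ^ (a - 1).re = t ^ (a.re - N - 1 - 1) * t ^ (N + 1) := by
    rw [← Real.rpow_natCast, ← Real.rpow_add ht, Complex.sub_re, Complex.one_re]
    push_cast
    ring_nf
  calc t ^ (a - 1).re
        * |Real.exp (-(c / t)) - ∑ m ∈ Finset.range (N + 1), (-(c / t)) ^ m / m.factorial|
      ≤ t ^ (a - 1).re * ((c / t) ^ (N + 1) / (N + 1).factorial) := by
        gcongr
        exact abs_exp_neg_sub_sum_range_le (div_nonneg hc ht.le) N
    _ = c ^ (N + 1) / (N + 1).factorial * t ^ (a.re - N - 1 - 1) := by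
        rw [hpow, div_pow]
        field_simp

theorem norm_integral_cpow_mul_exp_neg_div_mul_exp_neg_mul_sub_sum_le {a : ℂ} {r c : ℝ} {N : ℕ}
    (hr : 0 < r) (hc : 0 ≤ c) (ha : (N : ℝ) + 1 < a.re) :
    ‖(∫ t in Ioi (0 : ℝ), (t : ℂ) ^ (a - 1) * Complex.exp (-(c / t)) * Complex.exp (-(r * t)))
        - ∑ m ∈ Finset.range (N + 1),
            (-c : ℂ) ^ m / m.factorial * ((1 / r : ℂ) ^ (a - m) * Complex.Gamma (a - m))‖
      ≤ c ^ (N + 1) / (N + 1).factorial *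
          ((1 / r) ^ (a.re - N - 1) * Real.Gamma (a.re - N - 1)) := by
  have hp : 0 < a.re - N - 1 := by linarith
  have hre_pos : ∀ m ∈ Finset.range (N + 1), 0 < (a - m).re := by
    intro m hm
    have hm : (m : ℝ) ≤ N := by exact_mod_cast Finset.mem_range_succ_iff.mp hm
    simp only [Complex.sub_re, Complex.natCast_re]
    linarith
  have hterm_int : ∀ m ∈ Finset.range (N + 1), IntegrableOn
      (fun t : ℝ => (-c : ℂ) ^ m / m.factorial * ((t : ℂ) ^ (a - m - 1) * Complex.exp (-(r * t))))
      (Ioi 0) := fun m hm =>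
    (integrableOn_cpow_mul_exp_neg_mul (hre_pos m hm) hr).const_mul _
  have hint : IntegrableOn
      (fun t : ℝ => (t : ℂ) ^ (a - 1) * Complex.exp (-(c / t)) * Complex.exp (-(r * t)))
      (Ioi 0) := by
    refine Integrable.mono (integrableOn_cpow_mul_exp_neg_mul (a := a) (by linarith) hr)
      (by fun_prop) ?_
    filter_upwards [self_mem_ae_restrict measurableSet_Ioi] with t ht
    have hdecay : ‖Complex.exp (-(c / t))‖ ≤ 1 := by
      rw [← Complex.ofReal_div, ← Complex.ofReal_neg, Complex.norm_exp_ofReal, Real.exp_le_one_iff]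
      exact neg_nonpos.2 (div_nonneg hc (le_of_lt ht))
    rw [mul_right_comm, norm_mul]
    exact mul_le_of_le_one_right (norm_nonneg _) hdecay
  have hsum : ∑ m ∈ Finset.range (N + 1),
        (-c : ℂ) ^ m / m.factorial * ((1 / r : ℂ) ^ (a - m) * Complex.Gamma (a - m))
      = ∫ t in Ioi (0 : ℝ), ∑ m ∈ Finset.range (N + 1),
          (-c : ℂ) ^ m / m.factorial * ((t : ℂ) ^ (a - m - 1) * Complex.exp (-(r * t))) := by
    rw [integral_finsetSum _ hterm_int]
    refine Finset.sum_congr rfl fun m hm => ?_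
    rw [integral_const_mul, Complex.integral_cpow_mul_exp_neg_mul_Ioi (hre_pos m hm) hr]
  rw [hsum, ← integral_sub hint (integrable_finsetSum _ hterm_int),
    ← Real.integral_rpow_mul_exp_neg_mul_Ioi hp hr, ← integral_const_mul]
  refine norm_integral_le_of_norm_le ((integrableOn_rpow_mul_exp_neg_mul hp hr).const_mul _) ?_
  filter_upwards [self_mem_ae_restrict measurableSet_Ioi] with t ht
  simp only [← mul_assoc, ← Finset.sum_mul, ← sub_mul]
  have hre : (-(r * t : ℂ)).re = -(r * t) := by simp
  rw [norm_mul, Complex.norm_exp, hre]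
  exact mul_le_mul_of_nonneg_right (norm_cpow_mul_exp_neg_div_sub_sum_le ht a hc N)
    (Real.exp_pos _).le

/-- The `O_N` remainder estimate for the truncated `q`-expansion of the ℙ¹
oscillatory integral: for real `z, q > 0`, `N : ℕ` and `a ∈ ℂ` with `Re a > N + 1`,
`|∫₀^∞ e^{−(x+q/x)/z} x^{a−1} dx − Σ_{m=0}^{N} (−1)^m q^m z^{a−2m} Γ(a−m)/m!|
  ≤ q^{N+1} z^{Re a − 2(N+1)} Γ(Re a − N − 1)/(N+1)!`. -/
theorem p1_oscillatory_integral_truncation_estimate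
    (z q : ℝ) (hz : 0 < z) (hq : 0 < q) (N : ℕ) (a : ℂ) (ha : (N : ℝ) + 1 < a.re) :
    ‖((∫ x in Ioi (0 : ℝ),
          Complex.exp (-(((x + q / x : ℝ)) : ℂ) / (z : ℂ)) * (x : ℂ) ^ (a - 1))
        - ∑ m ∈ Finset.range (N + 1),
            (-1 : ℂ) ^ m * (q : ℂ) ^ m * (z : ℂ) ^ (a - 2 * (m : ℂ)) *
              Complex.Gamma (a - (m : ℂ)) / (m.factorial : ℂ))‖
      ≤ q ^ (N + 1) * z ^ (a.re - 2 * ((N : ℝ) + 1)) *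
          Real.Gamma (a.re - (N : ℝ) - 1) / ((N + 1).factorial : ℝ) := by
  have hzC : (z : ℂ) ≠ 0 := by exact_mod_cast hz.ne'
  have hintegrand :
      (fun x : ℝ => Complex.exp (-(((x + q / x : ℝ)) : ℂ) / (z : ℂ)) * (x : ℂ) ^ (a - 1))
      = fun x : ℝ => (x : ℂ) ^ (a - 1) * Complex.exp (-((q / z : ℝ) / x))
          * Complex.exp (-((z⁻¹ : ℝ) * x)) := by
    ext x
    rw [mul_comm, mul_assoc, ← Complex.exp_add]
    push_cast
    ring_nf
  have hterm : ∀ m ∈ Finset.range (N + 1),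
      (-1 : ℂ) ^ m * (q : ℂ) ^ m * (z : ℂ) ^ (a - 2 * (m : ℂ)) *
        Complex.Gamma (a - (m : ℂ)) / (m.factorial : ℂ)
      = (-(q / z : ℝ) : ℂ) ^ m / m.factorial
          * ((1 / (z⁻¹ : ℝ) : ℂ) ^ (a - m) * Complex.Gamma (a - m)) := by
    intro m _
    have hsplit : (z : ℂ) ^ (a - m) = (z : ℂ) ^ (a - 2 * m) * (z : ℂ) ^ m := by
      rw [← Complex.cpow_natCast, ← Complex.cpow_add _ _ hzC]
      ring_nf
    push_cast
    rw [one_div, inv_inv, hsplit, neg_pow ((q : ℂ) / z), div_pow]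
    field_simp
  have hbound : (q / z) ^ (N + 1) / (N + 1).factorial
        * ((1 / z⁻¹) ^ (a.re - N - 1) * Real.Gamma (a.re - N - 1))
      = q ^ (N + 1) * z ^ (a.re - 2 * ((N : ℝ) + 1))
          * Real.Gamma (a.re - (N : ℝ) - 1) / ((N + 1).factorial : ℝ) := by
    have hsplit : z ^ (a.re - N - 1) = z ^ (a.re - 2 * ((N : ℝ) + 1)) * z ^ (N + 1) := by
      rw [← Real.rpow_natCast, ← Real.rpow_add hz]
      push_cast
      ring_nf
    rw [one_div, inv_inv, hsplit, div_pow]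
    field_simp
  rw [hintegrand, Finset.sum_congr rfl hterm, ← hbound]
  exact norm_integral_cpow_mul_exp_neg_div_mul_exp_neg_mul_sub_sum_le (inv_pos.2 hz)
    (div_nonneg hq.le hz.le) ha
end

section
/- Let n ≥ 1 and k ≥ 0, let z > 0 be real, let a : Fin n → ℂ satisfy Re aᵢ > 0 for every i, and let c₁, …, c_k ∈ ℝⁿ be arbitrary vectors. For q = (q₁,…,q_k) with all qⱼ > 0, the function y ↦ exp(−(Σ_{i} e^{yᵢ} + Σ_{j} qⱼ e^{⟨cⱼ, y⟩})/z) · exp(Σ_{i} aᵢ yᵢ) is integrable on ℝⁿ, and as q tends to 0 in (ℝ_{>0})^k the integral ∫_{ℝⁿ} exp(−(Σ_{i} e^{yᵢ} + Σ_{j} qⱼ e^{⟨cⱼ, y⟩})/z) · exp(Σ_{i} aᵢ yᵢ) dy tends to Π_{i} ( z^{aᵢ} · Γ(aᵢ) ). -/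
open MeasureTheory Filter Topology

/-! In the coordinate `x = eᵗ`, the integral `∫ exp (-eᵗ / z) e^{bt} dt` is Euler's integral for
`Γ(b)` after the shift `t ↦ t - log z`, which produces the factor `z^b`. At `q = 0` the integrand
is a product of such one-dimensional functions. For `q ≥ 0` the perturbation multiplies the integrand
by `exp (-Σⱼ qⱼ e^{⟨cⱼ, y⟩} / z)`, which has modulus at most one, so the `q = 0` integrand
dominates every other one and dominated convergence gives the limit. -/

section ExpSubstitution

variable {E : Type*} [NormedAddCommGroup E] [NormedSpace ℝ E]

theorem integral_exp_smul_comp_exp (g : ℝ → E) :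
    ∫ x, Real.exp x • g (Real.exp x) = ∫ y in Set.Ioi 0, g y := by
  rw [← Real.range_exp, ← Set.image_univ, ← setIntegral_univ]
  simpa [abs_of_pos (Real.exp_pos _)] using (integral_image_eq_integral_abs_deriv_smul
    MeasurableSet.univ (fun x _ ↦ (Real.hasDerivAt_exp x).hasDerivWithinAt)
    Real.exp_injective.injOn g).symm

theorem integrable_exp_smul_comp_exp_iff (g : ℝ → E) :
    Integrable (fun x ↦ Real.exp x • g (Real.exp x)) ↔ IntegrableOn g (Set.Ioi 0) := by
  rw [← Real.range_exp, ← Set.image_univ, ← integrableOn_univ]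
  simpa [abs_of_pos (Real.exp_pos _)] using (integrableOn_image_iff_integrableOn_abs_deriv_smul
    MeasurableSet.univ (fun x _ ↦ (Real.hasDerivAt_exp x).hasDerivWithinAt)
    Real.exp_injective.injOn g).symm

end ExpSubstitution

namespace Complex

theorem ofReal_exp_cpow (t : ℝ) (w : ℂ) : ((Real.exp t : ℝ) : ℂ) ^ w = exp (w * t) := by
  rw [cpow_def_of_ne_zero (by exact_mod_cast (Real.exp_pos t).ne'),
    ← ofReal_log (Real.exp_pos t).le, Real.log_exp, mul_comm]

theorem exp_smul_GammaIntegrand_exp (s : ℂ) (t : ℝ) :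
    Real.exp t • (((-Real.exp t).exp : ℝ) * ((Real.exp t : ℝ) : ℂ) ^ (s - 1)) =
      exp (-(Real.exp t : ℂ)) * exp (s * t) := by
  rw [ofReal_exp_cpow, real_smul]
  push_cast
  rw [mul_left_comm, ← exp_add]
  ring_nf

theorem integrable_exp_neg_exp_mul_exp {s : ℂ} (hs : 0 < s.re) :
    Integrable fun t : ℝ ↦ exp (-(Real.exp t : ℂ)) * exp (s * t) := by
  simpa only [exp_smul_GammaIntegrand_exp] using
    (integrable_exp_smul_comp_exp_iff _).2 (GammaIntegral_convergent hs)

theorem integral_exp_neg_exp_mul_exp {s : ℂ} (hs : 0 < s.re) :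
    ∫ t : ℝ, exp (-(Real.exp t : ℂ)) * exp (s * t) = Gamma s := by
  simp only [← exp_smul_GammaIntegrand_exp]
  rw [Gamma_eq_integral hs, GammaIntegral]
  exact integral_exp_smul_comp_exp fun x : ℝ ↦ ((-x).exp : ℂ) * (x : ℂ) ^ (s - 1)

theorem exp_neg_exp_div_mul_exp_eq {z : ℝ} (hz : 0 < z) (s : ℂ) (t : ℝ) :
    exp (-(Real.exp t : ℂ) / z) * exp (s * t) =
      (z : ℂ) ^ s * (exp (-(Real.exp (t - Real.log z) : ℂ)) * exp (s * (t - Real.log z : ℝ))) := by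
  have hzs : (z : ℂ) ^ s = exp (s * Real.log z) := by
    rw [← ofReal_exp_cpow, Real.exp_log hz]
  rw [hzs, ← exp_add, ← exp_add, ← exp_add, Real.exp_sub, Real.exp_log hz]
  push_cast
  ring_nf

theorem integrable_exp_neg_exp_div_mul_exp {z : ℝ} (hz : 0 < z) {s : ℂ} (hs : 0 < s.re) :
    Integrable fun t : ℝ ↦ exp (-(Real.exp t : ℂ) / z) * exp (s * t) := by
  simpa only [← exp_neg_exp_div_mul_exp_eq hz] using
    ((integrable_exp_neg_exp_mul_exp hs).comp_sub_right (Real.log z)).const_mul ((z : ℂ) ^ s)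

theorem integral_exp_neg_exp_div_mul_exp {z : ℝ} (hz : 0 < z) {s : ℂ} (hs : 0 < s.re) :
    ∫ t : ℝ, exp (-(Real.exp t : ℂ) / z) * exp (s * t) = (z : ℂ) ^ s * Gamma s := by
  simp only [exp_neg_exp_div_mul_exp_eq hz]
  rw [integral_const_mul, integral_sub_right_eq_self
    (fun t : ℝ ↦ exp (-(Real.exp t : ℂ)) * exp (s * t)), integral_exp_neg_exp_mul_exp hs]

end Complex

section PerturbedIntegrand

variable {ι κ : Type*} [Fintype ι] [Fintype κ]

noncomputable def perturbedIntegrand (z : ℝ) (a : ι → ℂ) (c : κ → ι → ℝ) (q : κ → ℝ)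
    (y : ι → ℝ) : ℂ :=
  Complex.exp
      (-(((∑ i, Real.exp (y i)) + ∑ j, q j * Real.exp (∑ i, c j i * y i) : ℝ) : ℂ) / (z : ℂ)) *
    Complex.exp (∑ i, a i * (y i : ℂ))

variable (z : ℝ) (a : ι → ℂ) (c : κ → ι → ℝ)

theorem continuous_uncurry_perturbedIntegrand :
    Continuous (Function.uncurry (perturbedIntegrand z a c)) := by
  unfold perturbedIntegrand
  fun_prop

theorem perturbedIntegrand_zero_eq_prod (y : ι → ℝ) :
    perturbedIntegrand z a c 0 y =
      ∏ i, Complex.exp (-(Real.exp (y i) : ℂ) / z) * Complex.exp (a i * y i) := by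
  simp only [perturbedIntegrand, Pi.zero_apply, zero_mul, Finset.sum_const_zero, add_zero,
    Finset.prod_mul_distrib, ← Complex.exp_sum, Complex.ofReal_sum, neg_div, Finset.sum_div,
    Finset.sum_neg_distrib]

theorem perturbedIntegrand_eq_mul (q : κ → ℝ) (y : ι → ℝ) :
    perturbedIntegrand z a c q y =
      Complex.exp (-((∑ j, q j * Real.exp (∑ i, c j i * y i) : ℝ) : ℂ) / z) *
        perturbedIntegrand z a c 0 y := by
  simp only [perturbedIntegrand, Pi.zero_apply, zero_mul, Finset.sum_const_zero, add_zero,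
    ← Complex.exp_add, Complex.ofReal_add]
  ring_nf

variable {z a}

theorem norm_perturbedIntegrand_le (hz : 0 < z) {q : κ → ℝ} (hq : ∀ j, 0 ≤ q j) (y : ι → ℝ) :
    ‖perturbedIntegrand z a c q y‖ ≤ ‖perturbedIntegrand z a c 0 y‖ := by
  have hP : 0 ≤ ∑ j, q j * Real.exp (∑ i, c j i * y i) :=
    Finset.sum_nonneg fun j _ ↦ mul_nonneg (hq j) (Real.exp_pos _).le
  rw [perturbedIntegrand_eq_mul, norm_mul, Complex.norm_exp]
  refine mul_le_of_le_one_left (norm_nonneg _) (Real.exp_le_one_iff.2 ?_)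
  rw [← Complex.ofReal_neg, ← Complex.ofReal_div, Complex.ofReal_re]
  exact div_nonpos_of_nonpos_of_nonneg (neg_nonpos.2 hP) hz.le

theorem integrable_perturbedIntegrand_zero (hz : 0 < z) (ha : ∀ i, 0 < (a i).re) :
    Integrable (perturbedIntegrand z a c 0) := by
  rw [funext (perturbedIntegrand_zero_eq_prod z a c), volume_pi]
  exact Integrable.fintype_prod fun i ↦ Complex.integrable_exp_neg_exp_div_mul_exp hz (ha i)

theorem integral_perturbedIntegrand_zero (hz : 0 < z) (ha : ∀ i, 0 < (a i).re) :
    ∫ y, perturbedIntegrand z a c 0 y = ∏ i, (z : ℂ) ^ a i * Complex.Gamma (a i) := by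
  simp only [perturbedIntegrand_zero_eq_prod]
  rw [volume_pi, integral_fintype_prod_eq_prod (fun i (t : ℝ) ↦
    Complex.exp (-(Real.exp t : ℂ) / z) * Complex.exp (a i * t))]
  exact Finset.prod_congr rfl fun i _ ↦ Complex.integral_exp_neg_exp_div_mul_exp hz (ha i)

theorem integrable_perturbedIntegrand (hz : 0 < z) (ha : ∀ i, 0 < (a i).re) {q : κ → ℝ}
    (hq : ∀ j, 0 ≤ q j) : Integrable (perturbedIntegrand z a c q) :=
  (integrable_perturbedIntegrand_zero c hz ha).norm.mono'
    ((continuous_uncurry_perturbedIntegrand z a c).uncurry_left q).aestronglyMeasurable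
    (Eventually.of_forall (norm_perturbedIntegrand_le c hz hq))

theorem tendsto_integral_perturbedIntegrand (hz : 0 < z) (ha : ∀ i, 0 < (a i).re) :
    Tendsto (fun q ↦ ∫ y, perturbedIntegrand z a c q y) (𝓝[{q | ∀ j, 0 ≤ q j}] 0)
      (𝓝 (∏ i, (z : ℂ) ^ a i * Complex.Gamma (a i))) := by
  have hcont := continuous_uncurry_perturbedIntegrand z a c
  rw [← integral_perturbedIntegrand_zero c hz ha]
  refine tendsto_integral_filter_of_dominated_convergence _
    (Eventually.of_forall fun q ↦ (hcont.uncurry_left q).aestronglyMeasurable)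
    ?_ (integrable_perturbedIntegrand_zero c hz ha).norm
    (Eventually.of_forall fun y ↦ ((hcont.uncurry_right y).tendsto 0).mono_left inf_le_left)
  filter_upwards [self_mem_nhdsWithin] with q hq
  exact Eventually.of_forall (norm_perturbedIntegrand_le c hz hq)

end PerturbedIntegrand

theorem oscillatory_integral_perturbed_large_radius_limit_general
    (n k : ℕ) (z : ℝ) (hz : 0 < z) (a : Fin n → ℂ)
    (ha : ∀ i, 0 < (a i).re) (c : Fin k → (Fin n → ℝ)) :
    (∀ q : Fin k → ℝ, (∀ j, 0 < q j) →
      Integrable (fun y : Fin n → ℝ =>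
        Complex.exp
            (-(((∑ i, Real.exp (y i)) + ∑ j, q j * Real.exp (∑ i, c j i * y i) : ℝ) : ℂ) /
              (z : ℂ)) *
          Complex.exp (∑ i, a i * (y i : ℂ)))) ∧
    Tendsto
      (fun q : Fin k → ℝ => ∫ y : Fin n → ℝ,
        Complex.exp
            (-(((∑ i, Real.exp (y i)) + ∑ j, q j * Real.exp (∑ i, c j i * y i) : ℝ) : ℂ) /
              (z : ℂ)) *
          Complex.exp (∑ i, a i * (y i : ℂ)))
      (𝓝[{q : Fin k → ℝ | ∀ j, 0 < q j}] 0)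
      (𝓝 (∏ i, ((z : ℂ) ^ (a i) * Complex.Gamma (a i)))) :=
  ⟨fun _ hq ↦ integrable_perturbedIntegrand c hz ha fun j ↦ (hq j).le,
    (tendsto_integral_perturbedIntegrand c hz ha).mono_left
      (nhdsWithin_mono _ fun _ hq j ↦ (hq j).le)⟩

/-- Large radius limit of the oscillatory integral of the equivariantly
perturbed superpotential. For `n ≥ 1`, real `z > 0`, `a : Fin n → ℂ` with `Re aᵢ > 0`, and
arbitrary vectors `c₁,…,c_k ∈ ℝⁿ`: for every `q ∈ (ℝ_{>0})^k` the integrand is integrable,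
and as `q → 0` in the positive orthant the integral tends to `Πᵢ z^{aᵢ} Γ(aᵢ)`. -/
theorem oscillatory_integral_perturbed_large_radius_limit
    (n k : ℕ) (hn : 1 ≤ n) (z : ℝ) (hz : 0 < z) (a : Fin n → ℂ)
    (ha : ∀ i, 0 < (a i).re) (c : Fin k → (Fin n → ℝ)) :
    (∀ q : Fin k → ℝ, (∀ j, 0 < q j) →
      Integrable (fun y : Fin n → ℝ =>
        Complex.exp
            (-(((∑ i, Real.exp (y i)) + ∑ j, q j * Real.exp (∑ i, c j i * y i) : ℝ) : ℂ) /
              (z : ℂ)) *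
          Complex.exp (∑ i, a i * (y i : ℂ)))) ∧
    Tendsto
      (fun q : Fin k → ℝ => ∫ y : Fin n → ℝ,
        Complex.exp
            (-(((∑ i, Real.exp (y i)) + ∑ j, q j * Real.exp (∑ i, c j i * y i) : ℝ) : ℂ) /
              (z : ℂ)) *
          Complex.exp (∑ i, a i * (y i : ℂ)))
      (𝓝[{q : Fin k → ℝ | ∀ j, 0 < q j}] 0)
      (𝓝 (∏ i, ((z : ℂ) ^ (a i) * Complex.Gamma (a i)))) :=
  oscillatory_integral_perturbed_large_radius_limit_general n k z hz a ha c
end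

section
/- Let v₁, …, v_m ∈ ℝⁿ be vectors whose nonnegative span is all of ℝⁿ (i.e., every element of ℝⁿ is a nonnegative linear combination of v₁,…,v_m). Then for every real z > 0 and every w ∈ ℂⁿ, the function y ↦ exp(−(Σ_{i=1}^{m} e^{⟨vᵢ, y⟩})/z) · exp(⟨w, y⟩) is integrable on ℝⁿ, where ⟨w, y⟩ = Σ_j w_j y_j. -/
/-!
If `y ≠ 0` is a nonnegative combination `Σ cᵢ vᵢ`, then `⟨y, y⟩ = Σ cᵢ ⟨vᵢ, y⟩` forces some
`⟨vᵢ, y⟩ > 0`; by compactness of the unit sphere, `maxᵢ ⟨vᵢ, y⟩ ≥ b ‖y‖` for some `b > 0`.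
Hence `Σᵢ e^{⟨vᵢ, y⟩} ≥ e^{b ‖y‖}`, and the resulting doubly exponential decay of
`exp (-Σᵢ e^{⟨vᵢ, y⟩} / z)` beats the growth of `|exp ⟨w, y⟩| = exp ⟨Re w, y⟩`: the integrand is
bounded by a constant times `∏ⱼ e^{-|yⱼ|}`.
-/

open MeasureTheory

theorem exists_dotProduct_pos_of_nonneg_spanning {ι κ : Type*} [Fintype ι] [Fintype κ]
    {v : ι → κ → ℝ} (hv : ∀ y : κ → ℝ, ∃ c : ι → ℝ, (∀ i, 0 ≤ c i) ∧ y = ∑ i, c i • v i)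
    {y : κ → ℝ} (hy : y ≠ 0) : ∃ i, 0 < v i ⬝ᵥ y := by
  by_contra! h
  obtain ⟨c, hc, hcy⟩ := hv y
  have hyy : y ⬝ᵥ y = ∑ i, c i * (v i ⬝ᵥ y) := by
    nth_rewrite 1 [hcy]
    simp only [sum_dotProduct, smul_dotProduct, smul_eq_mul]
  have hpos : 0 < y ⬝ᵥ y := by
    simpa only [star_trivial] using Matrix.dotProduct_star_self_pos_iff.mpr hy
  exact hpos.not_ge
    (hyy ▸ Finset.sum_nonpos fun i _ => mul_nonpos_of_nonneg_of_nonpos (hc i) (h i))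

theorem exists_pos_mul_norm_le_of_forall_exists_pos {ι E : Type*} [Fintype ι]
    [NormedAddCommGroup E] [NormedSpace ℝ E] [FiniteDimensional ℝ E] (ℓ : ι → E →ₗ[ℝ] ℝ)
    (hℓ : ∀ y ≠ 0, ∃ i, 0 < ℓ i y) : ∃ b > 0, ∀ y ≠ 0, ∃ i, b * ‖y‖ ≤ ℓ i y := by
  rcases isEmpty_or_nonempty ι with hι | hι
  · exact ⟨1, one_pos, fun y hy => (hℓ y hy).elim fun i _ => isEmptyElim i⟩
  let M : E → ℝ := fun y => Finset.univ.sup' Finset.univ_nonempty fun i => ℓ i y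
  have hM : Continuous M := Continuous.finset_sup'_apply Finset.univ_nonempty fun i _ =>
    (ℓ i).continuous_of_finiteDimensional
  obtain ⟨b, hb, hbM⟩ := (isCompact_sphere (0 : E) 1).exists_forall_le' hM.continuousOn
    (a := 0) fun x hx => by
      obtain ⟨i, hi⟩ := hℓ x (ne_zero_of_mem_unit_sphere ⟨x, hx⟩)
      exact hi.trans_le (Finset.le_sup' (fun i => ℓ i x) (Finset.mem_univ i))
  refine ⟨b, hb, fun y hy => ?_⟩
  have hy' : 0 < ‖y‖ := norm_pos_iff.mpr hy
  obtain ⟨i, -, hi⟩ := Finset.exists_mem_eq_sup' Finset.univ_nonempty fun i => ℓ i (‖y‖⁻¹ • y)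
  refine ⟨i, ?_⟩
  have hb_le := hbM (‖y‖⁻¹ • y) (by simp [norm_smul, hy'.ne'])
  simp only [M, hi, map_smul, smul_eq_mul] at hb_le
  rwa [le_inv_mul_iff₀ hy', mul_comm] at hb_le

theorem mul_sub_exp_mul_div_le {b z : ℝ} (hb : 0 < b) (hz : 0 < z) (A : ℝ) {t : ℝ}
    (ht : 0 ≤ t) : A * t - Real.exp (b * t) / z ≤ A ^ 2 * z / (2 * b ^ 2) := by
  have hexp : (b * t) ^ 2 / 2 ≤ Real.exp (b * t) := by
    nlinarith [Real.quadratic_le_exp_of_nonneg (mul_nonneg hb.le ht)]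
  have hsq : A ^ 2 * z / (2 * b ^ 2) - (A * t - (b * t) ^ 2 / 2 / z) =
      (A * z - b ^ 2 * t) ^ 2 / (2 * b ^ 2 * z) := by
    field_simp
    ring
  calc A * t - Real.exp (b * t) / z ≤ A * t - (b * t) ^ 2 / 2 / z := by gcongr
    _ ≤ A ^ 2 * z / (2 * b ^ 2) := by
      linarith [show 0 ≤ (A * z - b ^ 2 * t) ^ 2 / (2 * b ^ 2 * z) by positivity]

theorem Real.exp_neg_abs_le (x : ℝ) : Real.exp (-|x|) ≤ 2 * (1 + x ^ 2)⁻¹ := by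
  have h : (1 + x ^ 2) / 2 ≤ Real.exp |x| := by
    nlinarith [Real.quadratic_le_exp_of_nonneg (abs_nonneg x), sq_abs x, abs_nonneg x]
  calc Real.exp (-|x|) = (Real.exp |x|)⁻¹ := Real.exp_neg _
    _ ≤ ((1 + x ^ 2) / 2)⁻¹ := inv_anti₀ (by positivity) h
    _ = 2 * (1 + x ^ 2)⁻¹ := by rw [inv_div, div_eq_mul_inv]

theorem integrable_exp_neg_abs : Integrable fun x : ℝ => Real.exp (-|x|) :=
  (integrable_inv_one_add_sq.const_mul 2).mono' (by fun_prop : Continuous _).aestronglyMeasurable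
    (ae_of_all _ fun x => by
      rw [Real.norm_of_nonneg (Real.exp_pos _).le]
      exact Real.exp_neg_abs_le x)

theorem norm_cexp_neg_div_mul_cexp (s z : ℝ) (u : ℂ) :
    ‖Complex.exp (-(s : ℂ) / z) * Complex.exp u‖ = Real.exp (-s / z + u.re) := by
  rw [norm_mul, Complex.norm_exp, Complex.norm_exp, ← Real.exp_add, ← Complex.ofReal_neg,
    ← Complex.ofReal_div, Complex.ofReal_re]

theorem sum_mul_add_sum_abs_le {κ : Type*} [Fintype κ] (c y : κ → ℝ) :
    ∑ j, c j * y j + ∑ j, |y j| ≤ (∑ j, (|c j| + 1)) * ‖y‖ := by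
  rw [← Finset.sum_add_distrib, Finset.sum_mul]
  gcongr with j
  calc c j * y j + |y j| ≤ (|c j| + 1) * |y j| := by
        rw [add_one_mul, ← abs_mul]
        gcongr
        exact le_abs_self _
    _ ≤ (|c j| + 1) * ‖y‖ := by gcongr; exact norm_le_pi_norm y j

/-- If `v₁,…,v_m ∈ ℝⁿ` nonnegatively span all of ℝⁿ, then for every real
`z > 0` and every `w ∈ ℂⁿ` the function
`y ↦ exp(−(Σᵢ e^{⟨vᵢ,y⟩})/z)·exp(⟨w,y⟩)` is integrable on ℝⁿ. -/
theorem oscillatory_integrand_integrable_of_spanning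
    (n m : ℕ) (v : Fin m → (Fin n → ℝ))
    (hv : ∀ y : Fin n → ℝ, ∃ c : Fin m → ℝ, (∀ i, 0 ≤ c i) ∧ y = ∑ i, c i • v i)
    (z : ℝ) (hz : 0 < z) (w : Fin n → ℂ) :
    Integrable (fun y : Fin n → ℝ =>
      Complex.exp (-((∑ i, Real.exp (∑ j, v i j * y j) : ℝ) : ℂ) / (z : ℂ)) *
        Complex.exp (∑ j, w j * (y j : ℂ))) := by
  obtain ⟨b, hb, hbv⟩ := exists_pos_mul_norm_le_of_forall_exists_pos
    (fun i => dotProductBilin ℝ ℝ (v i)) fun _ hy => exists_dotProduct_pos_of_nonneg_spanning hv hy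
  set A := ∑ j, (|(w j).re| + 1)
  set K := A ^ 2 * z / (2 * b ^ 2)
  refine ((Integrable.fintype_prod fun _ => integrable_exp_neg_abs).const_mul (Real.exp K)).mono'
    (by fun_prop : Continuous _).aestronglyMeasurable (ae_of_all _ fun y => ?_)
  rw [norm_cexp_neg_div_mul_cexp, ← Real.exp_sum, ← Real.exp_add, Real.exp_le_exp, neg_div,
    Complex.re_sum, Finset.sum_neg_distrib]
  simp only [Complex.re_mul_ofReal]
  have hlin := sum_mul_add_sum_abs_le (fun j => (w j).re) y
  rcases eq_or_ne y 0 with rfl | hy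
  · have hS_nonneg : 0 ≤ (∑ i, Real.exp (∑ j, v i j * (0 : Fin n → ℝ) j)) / z := by positivity
    rw [norm_zero, mul_zero] at hlin
    linarith [show 0 ≤ K by positivity]
  obtain ⟨i, hi⟩ := hbv y hy
  have hS : Real.exp (b * ‖y‖) ≤ ∑ i, Real.exp (∑ j, v i j * y j) :=
    (Real.exp_le_exp.mpr hi).trans <| Finset.single_le_sum
      (f := fun i => Real.exp (v i ⬝ᵥ y)) (fun i _ => (Real.exp_pos _).le) (Finset.mem_univ i)
  linarith [mul_sub_exp_mul_div_le hb hz A (norm_nonneg y), div_le_div_of_nonneg_right hS hz.le]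
end

section
/- Let N be a free abelian group of rank n, let φ : ℤ^r → N be a surjective group homomorphism with kernel L, and let S ⊆ Fin r be a subset of cardinality n such that the images (φ(eᵢ) ⊗ 1)_{i∈S} form a basis of N ⊗ ℚ. Then the subgroup K_σ^∨ of Hom(L, ℤ) generated by the restrictions to L of the coordinate functionals eⱼ* for j ∉ S is a subgroup of finite index in Hom(L, ℤ). -/
/-!
Since `N` is free, `φ` splits and `𝕃 = ker φ` is a direct summand of `ℤ^r`, so the restrictions
`Dₜ = eₜ*|_𝕃` of all coordinate functionals generate `𝕃^∨`. It remains to see that every `Dᵢ`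
with `i ∈ S` is torsion modulo `K_σ^∨`. Pick a rational functional on `ℚ ⊗ N` dual to
`φ(eᵢ) ⊗ 1` among the independent vectors `φ(eₛ) ⊗ 1`, `s ∈ S`. Composed with `φ` it vanishes
on `𝕃`; clearing denominators and restricting to `𝕃` gives a relation
`d • Dᵢ + ∑_{j ∉ S} aⱼ • Dⱼ = 0` with `d ≠ 0`.
-/

open scoped TensorProduct

section

open Module Submodule

theorem LinearMap.exists_leftInverse_ker_subtype_of_surjective {R M N : Type*} [Ring R]
    [AddCommGroup M] [Module R M] [AddCommGroup N] [Module R N] [Projective R N]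
    (φ : M →ₗ[R] N) (hφ : Function.Surjective φ) :
    ∃ π : M →ₗ[R] φ.ker, π ∘ₗ φ.ker.subtype = LinearMap.id := by
  obtain ⟨s, hs⟩ := projective_lifting_property φ LinearMap.id hφ
  refine ⟨codRestrict _ (LinearMap.id - s ∘ₗ φ) fun x => ?_, ?_⟩
  · simp [← LinearMap.comp_apply φ s, hs]
  · ext x
    simp [mem_ker.mp x.2]

theorem LinearMap.sum_apply_single_smul_proj_comp {R M ι : Type*} [CommRing R] [AddCommGroup M]
    [Module R M] [Fintype ι] [DecidableEq ι] (g : Dual R (ι → R)) (q : M →ₗ[R] ι → R) :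
    ∑ t, g (Pi.single t 1) • (proj t ∘ₗ q) = g ∘ₗ q := by
  have hsingle (t : ι) : (fun j => if t = j then (1 : R) else 0) = Pi.single t 1 := by
    ext j
    simp [Pi.single_apply, eq_comm]
  ext x
  simp [g.pi_apply_eq_sum_univ (q x), hsingle, mul_comm]

theorem Submodule.smul_mem_span_image_of_sum_smul_eq_zero {R M ι : Type*} [Ring R]
    [AddCommGroup M] [Module R M] [Fintype ι] [DecidableEq ι] {v : ι → M} {a : ι → R}
    (h : ∑ t, a t • v t = 0) {i : ι} {T : Set ι} (ha : ∀ t ∉ T, t ≠ i → a t = 0) :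
    a i • v i ∈ span R (v '' T) := by
  rw [← Finset.add_sum_erase _ _ (Finset.mem_univ i), add_eq_zero_iff_eq_neg] at h
  rw [h]
  refine neg_mem (sum_mem fun t ht => ?_)
  by_cases hT : t ∈ T
  · exact smul_mem _ _ (subset_span ⟨t, hT, rfl⟩)
  · simp [ha t hT (Finset.ne_of_mem_erase ht)]

theorem LinearIndependent.exists_dual_apply_eq_ite {K V κ : Type*} [Field K] [AddCommGroup V]
    [Module K V] [DecidableEq κ] {v : κ → V} (hv : LinearIndependent K v) (i : κ) :
    ∃ f : Dual K V, ∀ j, f (v j) = if j = i then 1 else 0 := by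
  obtain ⟨g, hg⟩ := (Finsupp.linearCombination K v).exists_leftInverse_of_injective
    (LinearMap.ker_eq_bot.mpr hv)
  refine ⟨Finsupp.lapply i ∘ₗ g, fun j => ?_⟩
  have hgv := LinearMap.congr_fun hg (Finsupp.single j 1)
  simp only [LinearMap.comp_apply, Finsupp.linearCombination_single, one_smul,
    LinearMap.id_apply] at hgv
  simp [hgv, Finsupp.single_apply]

theorem LinearMap.exists_smul_eq_algebraLinearMap_comp {R K M : Type*} [CommRing R] [CommRing K]
    [Algebra R K] [IsFractionRing R K] [AddCommGroup M] [Module R M] [Free R M] [Module.Finite R M]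
    (ℓ : M →ₗ[R] K) : ∃ d ∈ nonZeroDivisors R, ∃ g : Dual R M,
      Algebra.linearMap R K ∘ₗ g = d • ℓ := by
  let b := Free.chooseBasis R M
  obtain ⟨d, hd⟩ := IsLocalization.exist_integer_multiples (nonZeroDivisors R) Finset.univ
    (ℓ ∘ b)
  choose a ha using fun t => hd t (Finset.mem_univ t)
  refine ⟨d, d.2, b.constr R a, b.ext fun t => ?_⟩
  simpa using ha t

theorem Submodule.finite_quotient_of_exists_smul_mem {M ι : Type*} [AddCommGroup M] [Finite ι]
    (P : Submodule ℤ M) {v : ι → M} (hv : span ℤ (Set.range v) = ⊤)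
    (h : ∀ i, ∃ d : ℤ, d ≠ 0 ∧ d • v i ∈ P) : Finite (M ⧸ P) := by
  have : Module.Finite ℤ M := ⟨hv ▸ fg_span (Set.finite_range v)⟩
  refine Module.finite_of_fg_torsion _ ((isTorsion'_iff_torsion'_eq_top (R := ℤ) _).mpr ?_)
  rw [eq_top_iff, ← P.range_mkQ, LinearMap.range_eq_map, ← hv, map_span_le]
  rintro _ ⟨i, rfl⟩
  obtain ⟨d, hd, hdv⟩ := h i
  exact ⟨⟨d, mem_nonZeroDivisors_of_ne_zero hd⟩, (Quotient.mk_eq_zero P).mpr hdv⟩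

/-- For `p = 𝕃 = ker φ` these are the divisor classes `Dₜ`. -/
def Submodule.restrictCoord {R ι : Type*} [CommRing R] (p : Submodule R (ι → R)) (t : ι) :
    Dual R p :=
  LinearMap.proj t ∘ₗ p.subtype

theorem Submodule.sum_apply_single_smul_restrictCoord {R ι : Type*} [CommRing R] [Fintype ι]
    [DecidableEq ι] (p : Submodule R (ι → R)) (g : Dual R (ι → R)) :
    ∑ t, g (Pi.single t 1) • p.restrictCoord t = g ∘ₗ p.subtype :=
  g.sum_apply_single_smul_proj_comp p.subtype

theorem Submodule.span_range_restrictCoord_eq_top {R ι : Type*} [CommRing R] [Fintype ι]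
    [DecidableEq ι] {p : Submodule R (ι → R)} (π : (ι → R) →ₗ[R] p)
    (hπ : π ∘ₗ p.subtype = LinearMap.id) : span R (Set.range p.restrictCoord) = ⊤ := by
  refine eq_top_iff'.mpr fun f => ?_
  have hf : f = ∑ t, (f ∘ₗ π) (Pi.single t 1) • p.restrictCoord t := by
    rw [p.sum_apply_single_smul_restrictCoord, LinearMap.comp_assoc, hπ, LinearMap.comp_id]
  rw [hf]
  exact sum_mem fun t _ => smul_mem _ _ (subset_span ⟨t, rfl⟩)

theorem exists_smul_restrictCoord_ker_mem_span {ι N : Type*} [Fintype ι] [DecidableEq ι]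
    [AddCommGroup N] [Module ℤ N] (φ : (ι → ℤ) →ₗ[ℤ] N) (S : Finset ι)
    (hli : LinearIndependent ℚ (fun i : S => (1 : ℚ) ⊗ₜ[ℤ] φ (Pi.single (i : ι) 1))) (i : ι) :
    ∃ d : ℤ, d ≠ 0 ∧ d • φ.ker.restrictCoord i ∈
      span ℤ (Set.range fun j : {j // j ∉ S} => φ.ker.restrictCoord j) := by
  have hrange : (Set.range fun j : {j // j ∉ S} => φ.ker.restrictCoord j) =
      φ.ker.restrictCoord '' {j | j ∉ S} := by
    ext
    simp
  rw [hrange]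
  by_cases hiS : i ∉ S
  · exact ⟨1, one_ne_zero, by simpa using subset_span (Set.mem_image_of_mem _ hiS)⟩
  rw [not_not] at hiS
  obtain ⟨f, hf⟩ := hli.exists_dual_apply_eq_ite ⟨i, hiS⟩
  obtain ⟨d, hd, g, hg⟩ := ((f.restrictScalars ℤ) ∘ₗ (TensorProduct.mk ℤ ℚ N 1) ∘ₗ φ
    ).exists_smul_eq_algebraLinearMap_comp
  have hg_apply (x : ι → ℤ) : (g x : ℚ) = d * f (1 ⊗ₜ φ x) :=
    (LinearMap.congr_fun hg x).trans (zsmul_eq_mul _ _)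
  have hg_ker : g ∘ₗ φ.ker.subtype = 0 := by
    ext x
    have : (g x : ℚ) = 0 := by simp [hg_apply, LinearMap.mem_ker.mp x.2]
    exact_mod_cast this
  have hgS (t : ι) (ht : t ∈ S) (hti : t ≠ i) : g (Pi.single t 1) = 0 := by
    have : (g (Pi.single t 1) : ℚ) = 0 := by simp [hg_apply, hf ⟨t, ht⟩, hti]
    exact_mod_cast this
  have hgi : g (Pi.single i 1) = d := by
    have : (g (Pi.single i 1) : ℚ) = d := by simp [hg_apply, hf ⟨i, hiS⟩]
    exact_mod_cast this
  refine ⟨_, hgi ▸ nonZeroDivisors.ne_zero hd, smul_mem_span_image_of_sum_smul_eq_zero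
    (by rw [sum_apply_single_smul_restrictCoord, hg_ker]) fun t ht hti => hgS t (not_not.mp ht) hti⟩

end

theorem dual_divisor_lattice_finite_index_general
    {N : Type*} [AddCommGroup N] [Module ℤ N] [Module.Free ℤ N]
    (r : ℕ)
    (φ : (Fin r → ℤ) →ₗ[ℤ] N) (hφ : Function.Surjective φ)
    (S : Finset (Fin r))
    (hli : LinearIndependent ℚ
      (fun i : S => (1 : ℚ) ⊗ₜ[ℤ] φ (Pi.single (i : Fin r) 1) : S → ℚ ⊗[ℤ] N)) :
    Finite ((Module.Dual ℤ ↥(LinearMap.ker φ)) ⧸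
      Submodule.span ℤ
        (Set.range (fun j : {j : Fin r // j ∉ S} =>
          (LinearMap.proj (j : Fin r)).comp (LinearMap.ker φ).subtype))) := by
  obtain ⟨π, hπ⟩ := φ.exists_leftInverse_ker_subtype_of_surjective hφ
  exact (Submodule.span ℤ _).finite_quotient_of_exists_smul_mem
    (φ.ker.span_range_restrictCoord_eq_top π hπ) (exists_smul_restrictCoord_ker_mem_span φ S hli)

/-- Let `N` be free abelian of rank `n`, `φ : ℤ^r → N` surjective with kernel
`L`, and `S ⊆ Fin r` of cardinality `n` such that the images `φ(eᵢ) ⊗ 1`, `i ∈ S`, form a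
basis of `N ⊗ ℚ`. Then the subgroup `K_σ^∨` of `Hom(L,ℤ)` generated by the restrictions to
`L` of the coordinate functionals `eⱼ*`, `j ∉ S`, has finite index in `Hom(L,ℤ)`. -/
theorem dual_divisor_lattice_finite_index
    {N : Type*} [AddCommGroup N] [Module ℤ N] [Module.Free ℤ N] [Module.Finite ℤ N]
    (n r : ℕ) (hn : Module.finrank ℤ N = n)
    (φ : (Fin r → ℤ) →ₗ[ℤ] N) (hφ : Function.Surjective φ)
    (S : Finset (Fin r)) (hcard : S.card = n)
    (hli : LinearIndependent ℚ
      (fun i : S => (1 : ℚ) ⊗ₜ[ℤ] φ (Pi.single (i : Fin r) 1) : S → ℚ ⊗[ℤ] N))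
    (hspan : Submodule.span ℚ
      (Set.range (fun i : S => (1 : ℚ) ⊗ₜ[ℤ] φ (Pi.single (i : Fin r) 1)
        : S → ℚ ⊗[ℤ] N)) = ⊤) :
    Finite ((Module.Dual ℤ ↥(LinearMap.ker φ)) ⧸
      Submodule.span ℤ
        (Set.range (fun j : {j : Fin r // j ∉ S} =>
          (LinearMap.proj (j : Fin r)).comp (LinearMap.ker φ).subtype))) :=
  dual_divisor_lattice_finite_index_general r φ hφ S hli
end

section
/- Let V be an n-dimensional vector space over ℚ, let φ : ℚ^r → V be a surjective linear map with kernel L, and let S ⊆ Fin r have cardinality n with (φ(eᵢ))_{i∈S} a basis of V. For j ∉ S define s_{ij} ∈ ℚ (i ∈ S) by φ(eⱼ) = Σ_{i∈S} s_{ij} · φ(eᵢ), and for each m ∈ Fin r let D_m denote the restriction to L of the coordinate functional e_m*. Then for every i ∈ S, D_i = − Σ_{j∉S} s_{ij} · D_j as linear functionals on L. -/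
/-- With `φ : ℚ^r → V` surjective, `L = ker φ`, `S` of cardinality `n` with
`(φ(eᵢ))_{i∈S}` a basis of `V`, and `s i j` defined by `φ(eⱼ) = Σ_{i∈S} s i j • φ(eᵢ)` for
`j ∉ S`, the restricted coordinate functionals `D_m = e_m*|_L` satisfy
`D i = −Σ_{j∉S} s i j • D j` for every `i ∈ S`. -/
theorem divisor_relation_in_cone
    {V : Type*} [AddCommGroup V] [Module ℚ V] [FiniteDimensional ℚ V]
    (n r : ℕ) (hn : Module.finrank ℚ V = n)
    (φ : (Fin r → ℚ) →ₗ[ℚ] V) (hφ : Function.Surjective φ)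
    (S : Finset (Fin r)) (hcard : S.card = n)
    (hli : LinearIndependent ℚ (fun i : S => φ (Pi.single (i : Fin r) 1)))
    (hspan : Submodule.span ℚ
        (Set.range (fun i : S => φ (Pi.single (i : Fin r) 1))) = ⊤)
    (s : Fin r → Fin r → ℚ)
    (hs : ∀ j ∉ S, φ (Pi.single j 1) = ∑ i ∈ S, s i j • φ (Pi.single i 1)) :
    ∀ i ∈ S,
      (LinearMap.proj i).comp (LinearMap.ker φ).subtype
        = -∑ j ∈ Sᶜ, s i j •
            ((LinearMap.proj j).comp (LinearMap.ker φ).subtype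
              : ↥(LinearMap.ker φ) →ₗ[ℚ] ℚ) := by
  intro i hi
  ext ⟨x, hx⟩
  have hx0 : φ x = 0 := hx
  have hxsum : x = ∑ m, x m • (Pi.single m 1 : Fin r → ℚ) := by
    conv_lhs => rw [← Finset.univ_sum_single x]
    exact Finset.sum_congr rfl fun m _ => by
      rw [← Pi.single_smul, smul_eq_mul, mul_one]
  have hrep : φ x = ∑ m, x m • φ (Pi.single m 1) := by
    conv_lhs => rw [hxsum]
    rw [map_sum]
    exact Finset.sum_congr rfl fun m _ => by rw [map_smul]
  have hsplit : (0 : V) = ∑ m ∈ S, x m • φ (Pi.single m 1)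
      + ∑ m ∈ Sᶜ, x m • φ (Pi.single m 1) := by
    rw [Finset.sum_add_sum_compl, ← hrep, hx0]
  have hsub : ∑ j ∈ Sᶜ, x j • φ (Pi.single j 1)
      = ∑ i' ∈ S, (∑ j ∈ Sᶜ, s i' j * x j) • φ (Pi.single i' 1) := by
    calc ∑ j ∈ Sᶜ, x j • φ (Pi.single j 1)
        = ∑ j ∈ Sᶜ, ∑ i' ∈ S, (s i' j * x j) • φ (Pi.single i' 1) := by
          refine Finset.sum_congr rfl fun j hj => ?_
          rw [hs j (by simpa using hj), Finset.smul_sum]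
          exact Finset.sum_congr rfl fun i' _ => by rw [smul_smul, mul_comm]
      _ = ∑ i' ∈ S, ∑ j ∈ Sᶜ, (s i' j * x j) • φ (Pi.single i' 1) := Finset.sum_comm
      _ = ∑ i' ∈ S, (∑ j ∈ Sᶜ, s i' j * x j) • φ (Pi.single i' 1) := by
          exact Finset.sum_congr rfl fun i' _ => by rw [Finset.sum_smul]
  have hkey : (0 : V)
      = ∑ i' ∈ S, (x i' + ∑ j ∈ Sᶜ, s i' j * x j) • φ (Pi.single i' 1) := by
    rw [hsplit, hsub, ← Finset.sum_add_distrib]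
    refine Finset.sum_congr rfl fun i' _ => ?_
    rw [add_smul]
  have hkey' : ∑ i' : S, (x (i' : Fin r) + ∑ j ∈ Sᶜ, s (i' : Fin r) j * x j)
      • φ (Pi.single ((i' : Fin r)) 1) = 0 := by
    rw [Finset.sum_coe_sort S (fun i' => (x i' + ∑ j ∈ Sᶜ, s i' j * x j) • φ (Pi.single i' 1))]
    exact hkey.symm
  have hzero := Fintype.linearIndependent_iff.mp hli
    (fun i' : S => x (i' : Fin r) + ∑ j ∈ Sᶜ, s (i' : Fin r) j * x j) hkey'
  have h := hzero ⟨i, hi⟩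
  simp only [LinearMap.comp_apply, Submodule.coe_subtype, LinearMap.proj_apply,
    LinearMap.neg_apply, LinearMap.coe_sum, Finset.sum_apply, LinearMap.smul_apply,
    smul_eq_mul]
  have : x i = -∑ j ∈ Sᶜ, s i j * x j := by linarith [h, eq_neg_of_add_eq_zero_left h]
  simpa using this
end

section
/- Let N be a free abelian group of rank n, let φ : ℤ^r → N be a surjective homomorphism with kernel L, and let S ⊆ Fin r be a subset of cardinality n such that the elements bᵢ = φ(eᵢ), i ∈ S, are ℤ-linearly independent. Let K_σ = { β ∈ L ⊗ ℚ : ⟨eⱼ*, β⟩ ∈ ℤ for all j ∉ S }, a subgroup of L ⊗ ℚ containing L (where eⱼ* is the j-th coordinate functional of ℚ^r restricted along L ⊗ ℚ ⊆ ℚ^r). For β ∈ K_σ set v(β) = Σ_{i∈S} { −⟨eᵢ*, β⟩ } · bᵢ ∈ N ⊗ ℚ, where {x} = x − ⌊x⌋ is the fractional part. Then v(β) lies in (the image of) N and belongs to Box(σ) = { v ∈ N : v = Σ_{i∈S} cᵢ bᵢ with 0 ≤ cᵢ < 1 }, and v induces a bijection from the quotient group K_σ / L onto Box(σ). -/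
/-!
Let `φ_ℚ : ℚ^r → ℚ ⊗ N` be the rationalisation of `φ`. As `N` is torsion-free it embeds in
`ℚ ⊗ N`, and clearing denominators shows `L ⊗ ℚ = ker φ_ℚ`. For `β ∈ K_σ` the integral vector
`⌈β⌉` gives `1 ⊗ φ ⌈β⌉ = φ_ℚ (⌈β⌉ - β) = ∑_{i ∈ S} {-βᵢ} bᵢ`, since `⌈β⌉ - β` vanishes off `S`;
so `v(β) ∈ Box(σ)`. Conversely `φ m = ∑ cᵢ bᵢ ∈ Box(σ)` is `v(m - c)`. Finally the `bᵢ`, `i ∈ S`,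
stay linearly independent over `ℚ`, so `v(β₁) = v(β₂)` iff `β₁ - β₂` is integral on `S`, hence
integral everywhere, and an integral vector in `ker φ_ℚ` lies in `L`.
-/

open scoped TensorProduct

/-- The coordinatewise embedding `ℤ^r → ℚ^r`. -/
def ratCastPi (r : ℕ) (v : Fin r → ℤ) : Fin r → ℚ := fun i => (v i : ℚ)

section TorsionFree

variable {R K N : Type*} [CommRing R] [IsDomain R] [CommRing K] [Algebra R K]
  [IsFractionRing R K] [AddCommGroup N] [Module R N] [Module.IsTorsionFree R N]

theorem TensorProduct.mk_one_injective_of_isTorsionFree :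
    Function.Injective (TensorProduct.mk R K N 1) :=
  (IsLocalizedModule.injective_iff_isRegular (nonZeroDivisors R) _).mpr fun c =>
    IsSMulRegular.of_ne_zero (nonZeroDivisors.coe_ne_zero c)

end TorsionFree

theorem exists_smul_eq_ratCastPi {r : ℕ} (β : Fin r → ℚ) :
    ∃ d : ℤ, d ≠ 0 ∧ ∃ m, (d : ℚ) • β = ratCastPi r m := by
  obtain ⟨⟨d, hd⟩, hint⟩ := IsLocalization.exist_integer_multiples_of_finite (nonZeroDivisors ℤ) β
  choose m hm using hint
  refine ⟨d, nonZeroDivisors.ne_zero hd, m, funext fun i => ?_⟩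
  simpa [ratCastPi, Submonoid.smul_def, eq_comm] using hm i

section

variable {N : Type*} [AddCommGroup N] [Module ℤ N] {r : ℕ} (φ : (Fin r → ℤ) →ₗ[ℤ] N)

noncomputable def ratExtension : (Fin r → ℚ) →ₗ[ℚ] ℚ ⊗[ℤ] N :=
  Fintype.linearCombination ℚ fun i => (1 : ℚ) ⊗ₜ[ℤ] φ (Pi.single i 1)

theorem ratExtension_apply (β : Fin r → ℚ) :
    ratExtension φ β = ∑ i, β i • ((1 : ℚ) ⊗ₜ[ℤ] φ (Pi.single i 1)) :=
  Fintype.linearCombination_apply ..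

theorem ratExtension_ratCastPi (m : Fin r → ℤ) :
    ratExtension φ (ratCastPi r m) = (1 : ℚ) ⊗ₜ[ℤ] φ m := by
  conv_rhs => rw [← (Pi.basisFun ℤ (Fin r)).sum_repr m]
  simp only [ratExtension_apply, ratCastPi, Pi.basisFun_repr, Pi.basisFun_apply, map_sum,
    TensorProduct.tmul_sum, Int.cast_smul_eq_zsmul]
  exact Finset.sum_congr rfl fun i _ => (map_zsmul (TensorProduct.mk ℤ ℚ N 1 ∘ₗ φ) _ _).symm

theorem ratExtension_apply_of_notMem_eq_zero {S : Finset (Fin r)} {β : Fin r → ℚ}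
    (hβ : ∀ j ∉ S, β j = 0) :
    ratExtension φ β = ∑ i ∈ S, β i • ((1 : ℚ) ⊗ₜ[ℤ] φ (Pi.single i 1)) := by
  rw [ratExtension_apply, Finset.sum_subset S.subset_univ fun j _ hj => by rw [hβ j hj, zero_smul]]

/-- The paper's `v(β)`, read in `ℚ ⊗ N`. -/
noncomputable def boxVector (S : Finset (Fin r)) (β : Fin r → ℚ) : ℚ ⊗[ℤ] N :=
  ∑ i ∈ S, Int.fract (-β i) • ((1 : ℚ) ⊗ₜ[ℤ] φ (Pi.single i 1))

theorem tmul_ceil_eq_boxVector {S : Finset (Fin r)} {β : Fin r → ℚ}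
    (hβ : ratExtension φ β = 0) (hint : ∀ j ∉ S, ∃ k : ℤ, β j = k) :
    (1 : ℚ) ⊗ₜ[ℤ] φ (fun j => ⌈β j⌉) = boxVector φ S β := by
  have hsupp : ∀ j ∉ S, (ratCastPi r (fun j => ⌈β j⌉) - β) j = 0 := by
    intro j hj
    obtain ⟨k, hk⟩ := hint j hj
    simp [ratCastPi, hk]
  rw [← ratExtension_ratCastPi, ← sub_zero (ratExtension φ _), ← hβ, ← map_sub,
    ratExtension_apply_of_notMem_eq_zero φ hsupp, boxVector]
  refine Finset.sum_congr rfl fun i _ => ?_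
  rw [Int.fract, Int.floor_neg, Pi.sub_apply, ratCastPi]
  push_cast
  ring_nf

theorem exists_boxVector_eq_tmul {S : Finset (Fin r)} {m : Fin r → ℤ} {c : Fin r → ℚ}
    (hc : ∀ i ∈ S, 0 ≤ c i ∧ c i < 1)
    (hm : (1 : ℚ) ⊗ₜ[ℤ] φ m = ∑ i ∈ S, c i • ((1 : ℚ) ⊗ₜ[ℤ] φ (Pi.single i 1))) :
    ∃ β, (ratExtension φ β = 0 ∧ ∀ j ∉ S, ∃ k : ℤ, β j = k) ∧
      (1 : ℚ) ⊗ₜ[ℤ] φ m = boxVector φ S β := by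
  set c' : Fin r → ℚ := fun i => if i ∈ S then c i else 0
  refine ⟨ratCastPi r m - c', ⟨?_, fun j hj => ⟨m j, by simp [c', ratCastPi, hj]⟩⟩, ?_⟩
  · rw [map_sub, ratExtension_ratCastPi, hm,
      ratExtension_apply_of_notMem_eq_zero φ (fun j hj => if_neg hj : ∀ j ∉ S, c' j = 0), sub_eq_zero]
    exact Finset.sum_congr rfl fun i hi => by rw [if_pos hi]
  · rw [hm, boxVector]
    refine Finset.sum_congr rfl fun i hi => ?_
    rw [Pi.sub_apply, neg_sub, ratCastPi, Int.fract_sub_intCast, show c' i = c i from if_pos hi,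
      Int.fract_eq_self.mpr (hc i hi)]

theorem boxVector_eq_boxVector_iff {S : Finset (Fin r)} {β₁ β₂ : Fin r → ℚ}
    (hli : LinearIndepOn ℚ (fun i => (1 : ℚ) ⊗ₜ[ℤ] φ (Pi.single i 1)) (S : Set (Fin r)))
    (h₁ : ∀ j ∉ S, ∃ k : ℤ, β₁ j = k) (h₂ : ∀ j ∉ S, ∃ k : ℤ, β₂ j = k) :
    boxVector φ S β₁ = boxVector φ S β₂ ↔ ∃ l, β₁ - β₂ = ratCastPi r l := by
  constructor
  · intro h
    have hfract := linearIndepOn_finset_iffₛ.mp hli _ _ h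
    have hint : ∀ i, ∃ k : ℤ, (β₁ - β₂) i = k := by
      intro i
      by_cases hi : i ∈ S
      · obtain ⟨k, hk⟩ := Int.fract_eq_fract.mp (hfract i hi)
        exact ⟨-k, by rw [Pi.sub_apply]; push_cast; linarith⟩
      · obtain ⟨k₁, hk₁⟩ := h₁ i hi
        obtain ⟨k₂, hk₂⟩ := h₂ i hi
        exact ⟨k₁ - k₂, by simp [hk₁, hk₂]⟩
    choose l hl using hint
    exact ⟨l, funext hl⟩
  · rintro ⟨l, hl⟩
    refine Finset.sum_congr rfl fun i _ => ?_
    rw [eq_add_of_sub_eq' (congrFun hl i), neg_add, ratCastPi, ← sub_eq_add_neg, Int.fract_sub_intCast]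

variable [Module.IsTorsionFree ℤ N]

theorem ratExtension_ratCastPi_eq_zero_iff {m : Fin r → ℤ} :
    ratExtension φ (ratCastPi r m) = 0 ↔ m ∈ LinearMap.ker φ := by
  rw [ratExtension_ratCastPi, LinearMap.mem_ker]
  exact map_eq_zero_iff _ TensorProduct.mk_one_injective_of_isTorsionFree

theorem span_ratCastPi_ker :
    Submodule.span ℚ (ratCastPi r '' (LinearMap.ker φ : Set (Fin r → ℤ))) =
      LinearMap.ker (ratExtension φ) := by
  apply le_antisymm
  · rw [Submodule.span_le]
    rintro _ ⟨l, hl, rfl⟩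
    exact (ratExtension_ratCastPi_eq_zero_iff φ).mpr hl
  · intro β hβ
    obtain ⟨d, hd, m, hm⟩ := exists_smul_eq_ratCastPi β
    have hm_ker : m ∈ LinearMap.ker φ := by
      rw [← ratExtension_ratCastPi_eq_zero_iff, ← hm, map_smul, LinearMap.mem_ker.mp hβ, smul_zero]
    rw [← inv_smul_smul₀ (Int.cast_ne_zero.mpr hd : (d : ℚ) ≠ 0) β, hm]
    exact Submodule.smul_mem _ _ (Submodule.subset_span ⟨m, hm_ker, rfl⟩)

theorem exists_mem_ker_eq_ratCastPi_iff {β : Fin r → ℚ} (hβ : ratExtension φ β = 0) :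
    (∃ l ∈ LinearMap.ker φ, β = ratCastPi r l) ↔ ∃ l, β = ratCastPi r l :=
  ⟨fun ⟨l, _, h⟩ => ⟨l, h⟩, fun ⟨l, h⟩ =>
    ⟨l, (ratExtension_ratCastPi_eq_zero_iff φ).mp (h ▸ hβ), h⟩⟩

end

theorem box_parametrizes_Ksigma_mod_L_general
    {N : Type*} [AddCommGroup N] [Module ℤ N] [Module.Free ℤ N]
    (r : ℕ)
    (φ : (Fin r → ℤ) →ₗ[ℤ] N) (hφ : Function.Surjective φ)
    (S : Finset (Fin r))
    (hli : LinearIndependent ℤ (fun i : S => φ (Pi.single (i : Fin r) 1)))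
    (Kσ : Set (Fin r → ℚ))
    (hK : Kσ = {β | β ∈ Submodule.span ℚ
        (ratCastPi r '' ((LinearMap.ker φ : Submodule ℤ (Fin r → ℤ)) : Set (Fin r → ℤ))) ∧
        ∀ j ∉ S, ∃ k : ℤ, β j = (k : ℚ)})
    (Box : Set N)
    (hBox : Box = {w | ∃ c : Fin r → ℚ, (∀ i ∈ S, 0 ≤ c i ∧ c i < 1) ∧
        ((1 : ℚ) ⊗ₜ[ℤ] w : ℚ ⊗[ℤ] N)
          = ∑ i ∈ S, c i • ((1 : ℚ) ⊗ₜ[ℤ] φ (Pi.single i 1))}) :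
    (∀ β ∈ Kσ, ∃ w ∈ Box,
        ((1 : ℚ) ⊗ₜ[ℤ] w : ℚ ⊗[ℤ] N)
          = ∑ i ∈ S, Int.fract (-(β i)) • ((1 : ℚ) ⊗ₜ[ℤ] φ (Pi.single i 1))) ∧
    (∀ w ∈ Box, ∃ β ∈ Kσ,
        ((1 : ℚ) ⊗ₜ[ℤ] w : ℚ ⊗[ℤ] N)
          = ∑ i ∈ S, Int.fract (-(β i)) • ((1 : ℚ) ⊗ₜ[ℤ] φ (Pi.single i 1))) ∧
    (∀ β₁ ∈ Kσ, ∀ β₂ ∈ Kσ,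
        ((∑ i ∈ S, Int.fract (-(β₁ i)) •
            (((1 : ℚ) ⊗ₜ[ℤ] φ (Pi.single i 1)) : ℚ ⊗[ℤ] N))
          = ∑ i ∈ S, Int.fract (-(β₂ i)) • ((1 : ℚ) ⊗ₜ[ℤ] φ (Pi.single i 1)))
        ↔ ∃ l ∈ LinearMap.ker φ, β₁ - β₂ = ratCastPi r l) := by
  have hliℚ : LinearIndepOn ℚ (fun i => (1 : ℚ) ⊗ₜ[ℤ] φ (Pi.single i 1)) (S : Set (Fin r)) :=
    hli.of_isLocalizedModule ℚ (nonZeroDivisors ℤ) (TensorProduct.mk ℤ ℚ N 1)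
  rw [span_ratCastPi_ker] at hK
  subst hK hBox
  refine ⟨fun β ⟨hβ, hint⟩ => ?_, fun w ⟨c, hc, hw⟩ => ?_,
    fun β₁ ⟨hβ₁, h₁⟩ β₂ ⟨hβ₂, h₂⟩ => ?_⟩
  · have hceil := tmul_ceil_eq_boxVector φ hβ hint
    exact ⟨_, ⟨_, fun i _ => ⟨Int.fract_nonneg _, Int.fract_lt_one _⟩, hceil⟩, hceil⟩
  · obtain ⟨m, rfl⟩ := hφ w
    exact exists_boxVector_eq_tmul φ hc hw
  · have hβ : ratExtension φ (β₁ - β₂) = 0 := by rw [map_sub, hβ₁, hβ₂, sub_zero]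
    exact (boxVector_eq_boxVector_iff φ hliℚ h₁ h₂).trans
      (exists_mem_ker_eq_ratCastPi_iff φ hβ).symm

/-- With `φ : ℤ^r → N` surjective onto the rank-`n` free abelian group `N`,
`L = ker φ`, `S` of cardinality `n` with `(bᵢ = φ(eᵢ))_{i∈S}` ℤ-linearly independent, let
`K_σ = {β ∈ L ⊗ ℚ : ⟨eⱼ*, β⟩ ∈ ℤ ∀ j ∉ S}` (inside `ℚ^r`) and
`Box(σ) = {v ∈ N : v = Σ_{i∈S} cᵢ bᵢ, 0 ≤ cᵢ < 1}` (read in `ℚ ⊗ N`). For `β ∈ K_σ` the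
element `v(β) = Σ_{i∈S} {−βᵢ}·bᵢ` lies in `N` and belongs to `Box(σ)`, and `v` induces a
bijection `K_σ/L ≅ Box(σ)`: it is surjective onto `Box(σ)` and `v(β₁) = v(β₂)` iff
`β₁ − β₂ ∈ L`. -/
theorem box_parametrizes_Ksigma_mod_L
    {N : Type*} [AddCommGroup N] [Module ℤ N] [Module.Free ℤ N] [Module.Finite ℤ N]
    (n r : ℕ) (hn : Module.finrank ℤ N = n)
    (φ : (Fin r → ℤ) →ₗ[ℤ] N) (hφ : Function.Surjective φ)
    (S : Finset (Fin r)) (hcard : S.card = n)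
    (hli : LinearIndependent ℤ (fun i : S => φ (Pi.single (i : Fin r) 1)))
    (Kσ : Set (Fin r → ℚ))
    (hK : Kσ = {β | β ∈ Submodule.span ℚ
        (ratCastPi r '' ((LinearMap.ker φ : Submodule ℤ (Fin r → ℤ)) : Set (Fin r → ℤ))) ∧
        ∀ j ∉ S, ∃ k : ℤ, β j = (k : ℚ)})
    (Box : Set N)
    (hBox : Box = {w | ∃ c : Fin r → ℚ, (∀ i ∈ S, 0 ≤ c i ∧ c i < 1) ∧
        ((1 : ℚ) ⊗ₜ[ℤ] w : ℚ ⊗[ℤ] N)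
          = ∑ i ∈ S, c i • ((1 : ℚ) ⊗ₜ[ℤ] φ (Pi.single i 1))}) :
    (∀ β ∈ Kσ, ∃ w ∈ Box,
        ((1 : ℚ) ⊗ₜ[ℤ] w : ℚ ⊗[ℤ] N)
          = ∑ i ∈ S, Int.fract (-(β i)) • ((1 : ℚ) ⊗ₜ[ℤ] φ (Pi.single i 1))) ∧
    (∀ w ∈ Box, ∃ β ∈ Kσ,
        ((1 : ℚ) ⊗ₜ[ℤ] w : ℚ ⊗[ℤ] N)
          = ∑ i ∈ S, Int.fract (-(β i)) • ((1 : ℚ) ⊗ₜ[ℤ] φ (Pi.single i 1))) ∧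
    (∀ β₁ ∈ Kσ, ∀ β₂ ∈ Kσ,
        ((∑ i ∈ S, Int.fract (-(β₁ i)) •
            (((1 : ℚ) ⊗ₜ[ℤ] φ (Pi.single i 1)) : ℚ ⊗[ℤ] N))
          = ∑ i ∈ S, Int.fract (-(β₂ i)) • ((1 : ℚ) ⊗ₜ[ℤ] φ (Pi.single i 1)))
        ↔ ∃ l ∈ LinearMap.ker φ, β₁ - β₂ = ratCastPi r l) :=
  box_parametrizes_Ksigma_mod_L_general r φ hφ S hli Kσ hK Box hBox
end
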